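/- Let f₁(x) = ∑_{m≥0} b_m x^m with b_m ≥ 0 converge at x = 1 (hence on [−1,1]), and let g(t) = ∑_{q≥0} a_q t^q with a_q ≥ 0 converge for all t ∈ ℝ. Define K_N(X, Y) := g(∑_{i=1}^n f₁(⟨X_i, Y_i⟩_{ℝ^d})) on I × I. Suppose e₁,…,eₙ : S^{d-1} → ℝ are continuous and there are functions λ_i : ℕ → ℝ with 0 ≤ λ_i(α) ≤ (|S^{d-1}| · f₁(1))^α for all α, such that for every i, every α ∈ ℕ and every y ∈ S^{d-1}: ∫_{S^{d-1}} f₁(⟨x, y⟩)^α e_i(x) dσ_{d-1}(x) = λ_i(α) e_i(y). Then the number μ := ∑_{q≥0} a_q ∑_{α₁+⋯+αₙ=q} (q!/(α₁!⋯αₙ!)) ∏_{i=1}^n λ_i(α_i) is given by an absolutely convergent series, and for every Y ∈ I: ∫_I K_N(X, Y) ∏_{i=1}^n e_i(X_i) d(⊗_{i=1}^n σ_{d-1})(X) = μ · ∏_{i=1}^n e_i(Y_i). -/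

import Mathlib

/-! Expand `g` termwise and `(∑ᵢ f₁(⟨Xᵢ, Yᵢ⟩))^q` by the multinomial theorem: every resulting
term of the integrand is a product of functions of the separate coordinates `Xᵢ`, so by Fubini
its integral is `∏ᵢ λᵢ(αᵢ) eᵢ(Yᵢ)`. Exchanging `∑_q` with `∫` is legitimate because
`|∑ᵢ f₁(⟨Xᵢ, Yᵢ⟩)| ≤ n f₁(1)` and `g` converges absolutely at `n f₁(1)`; the bound
`λᵢ(α) ≤ (|S^{d-1}| f₁(1))^α` likewise compares the series for `μ` with `g(n |S^{d-1}| f₁(1))`. -/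

open scoped BigOperators
open MeasureTheory

/-- The surface (Lebesgue) measure `σ_{d-1}` on the unit sphere `S^{d-1} ⊆ ℝ^d`. -/
noncomputable def sphereMeasure (d : ℕ) :
    Measure (Metric.sphere (0 : EuclideanSpace ℝ (Fin d)) 1) :=
  (volume : Measure (EuclideanSpace ℝ (Fin d))).toSphere

/-- `dotSeries b x = ∑_{m≥0} b m x^m`, i.e. `f₁(x)`. -/
noncomputable def dotSeries (b : ℕ → ℝ) (x : ℝ) : ℝ :=
  ∑' m : ℕ, b m * x ^ m

/-- The multi-layer kernel `K_N(X, Y) := g(∑_{i=1}^n f₁(⟨X_i, Y_i⟩))` with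
`g(t) = ∑_q a_q t^q`. -/
noncomputable def kerNK (d n : ℕ) (b a : ℕ → ℝ)
    (X Y : Fin n → Metric.sphere (0 : EuclideanSpace ℝ (Fin d)) 1) : ℝ :=
  ∑' q : ℕ, a q *
    (∑ i : Fin n,
        dotSeries b
          ((inner ℝ ((X i : EuclideanSpace ℝ (Fin d))) ((Y i : EuclideanSpace ℝ (Fin d))) : ℝ)))
      ^ q

open Finset

section DotSeries

variable {b : ℕ → ℝ}

lemma norm_mul_pow_le_of_abs_le_one (hb0 : ∀ m, 0 ≤ b m) {t : ℝ} (ht : |t| ≤ 1) (m : ℕ) :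
    ‖b m * t ^ m‖ ≤ b m := by
  rw [Real.norm_eq_abs, abs_mul, abs_of_nonneg (hb0 m), abs_pow]
  exact mul_le_of_le_one_right (hb0 m) (pow_le_one₀ (abs_nonneg t) ht)

lemma abs_dotSeries_le (hb0 : ∀ m, 0 ≤ b m) (hb1 : Summable b) {t : ℝ} (ht : |t| ≤ 1) :
    |dotSeries b t| ≤ dotSeries b 1 := by
  have hle := norm_mul_pow_le_of_abs_le_one hb0 ht
  have hsum : Summable fun m => ‖b m * t ^ m‖ := .of_nonneg_of_le (fun _ => norm_nonneg _) hle hb1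
  calc |dotSeries b t| ≤ ∑' m, ‖b m * t ^ m‖ := norm_tsum_le_tsum_norm hsum
    _ ≤ ∑' m, b m := hsum.tsum_le_tsum hle hb1
    _ = dotSeries b 1 := by simp [dotSeries]

lemma continuousOn_dotSeries (hb0 : ∀ m, 0 ≤ b m) (hb1 : Summable b) :
    ContinuousOn (dotSeries b) (Set.Icc (-1) 1) :=
  continuousOn_tsum (fun m => (continuous_const.mul (continuous_pow m)).continuousOn) hb1
    fun m _ ht => norm_mul_pow_le_of_abs_le_one hb0 (abs_le.2 ht) m

end DotSeries

lemma abs_inner_le_one_of_mem_sphere {E : Type*} [NormedAddCommGroup E] [InnerProductSpace ℝ E]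
    {x y : E} (hx : x ∈ Metric.sphere 0 1) (hy : y ∈ Metric.sphere 0 1) :
    |(inner ℝ x y : ℝ)| ≤ 1 := by
  simpa [mem_sphere_zero_iff_norm.1 hx, mem_sphere_zero_iff_norm.1 hy] using
    abs_real_inner_le_norm x y

instance isFiniteMeasure_sphereMeasure (d : ℕ) : IsFiniteMeasure (sphereMeasure d) := by
  unfold sphereMeasure; infer_instance

lemma sum_multinomial_mul_prod_le_pow {ι : Type*} [Fintype ι] [DecidableEq ι]
    {lam : ι → ℕ → ℝ} {C : ℝ} (hlam0 : ∀ i k, 0 ≤ lam i k) (hlamC : ∀ i k, lam i k ≤ C ^ k)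
    (q : ℕ) :
    ∑ k ∈ piAntidiag univ q, (Nat.multinomial univ k : ℝ) * ∏ i, lam i (k i) ≤
      (Fintype.card ι * C) ^ q := by
  calc ∑ k ∈ piAntidiag univ q, (Nat.multinomial univ k : ℝ) * ∏ i, lam i (k i)
      ≤ ∑ k ∈ piAntidiag univ q, (Nat.multinomial univ k : ℝ) * ∏ i, C ^ k i := by
        gcongr with k _ i
        · exact fun i _ => hlam0 i (k i)
        · exact hlamC i (k i)
    _ = (Fintype.card ι * C) ^ q := by
        rw [← card_univ, ← nsmul_eq_mul, ← sum_const, sum_pow_eq_sum_piAntidiag]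

lemma summable_mul_sum_multinomial_mul_prod {ι : Type*} [Fintype ι] [DecidableEq ι]
    {a : ℕ → ℝ} {lam : ι → ℕ → ℝ} {C : ℝ} (ha0 : ∀ q, 0 ≤ a q)
    (ha : Summable fun q => a q * (Fintype.card ι * C) ^ q)
    (hlam0 : ∀ i k, 0 ≤ lam i k) (hlamC : ∀ i k, lam i k ≤ C ^ k) :
    Summable fun q => a q * ∑ k ∈ piAntidiag univ q,
      (Nat.multinomial univ k : ℝ) * ∏ i, lam i (k i) := by
  refine .of_nonneg_of_le (fun q => mul_nonneg (ha0 q) ?_)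
    (fun q => mul_le_mul_of_nonneg_left (sum_multinomial_mul_prod_le_pow hlam0 hlamC q) (ha0 q)) ha
  exact sum_nonneg fun k _ => mul_nonneg (Nat.cast_nonneg _) (prod_nonneg fun i _ => hlam0 i (k i))

theorem integral_sum_pow_mul_prod {ι : Type*} [Fintype ι] [DecidableEq ι] {E : ι → Type*}
    {mE : ∀ i, MeasurableSpace (E i)} {μ : ∀ i, Measure (E i)} [∀ i, SigmaFinite (μ i)]
    {f e : ∀ i, E i → ℝ} (hfe : ∀ i k, Integrable (fun x => f i x ^ k * e i x) (μ i)) (q : ℕ) :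
    ∫ x, (∑ i, f i (x i)) ^ q * ∏ i, e i (x i) ∂Measure.pi μ =
      ∑ k ∈ piAntidiag univ q,
        (Nat.multinomial univ k : ℝ) * ∏ i, ∫ x, f i x ^ k i * e i x ∂μ i := by
  calc ∫ x, (∑ i, f i (x i)) ^ q * ∏ i, e i (x i) ∂Measure.pi μ
      = ∫ x, ∑ k ∈ piAntidiag univ q,
          (Nat.multinomial univ k : ℝ) * ∏ i, f i (x i) ^ k i * e i (x i) ∂Measure.pi μ := by
        simp_rw [sum_pow_eq_sum_piAntidiag, sum_mul, mul_assoc, prod_mul_distrib]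
    _ = ∑ k ∈ piAntidiag univ q, ∫ x,
          (Nat.multinomial univ k : ℝ) * ∏ i, f i (x i) ^ k i * e i (x i) ∂Measure.pi μ :=
        integral_finsetSum _ fun k _ =>
          (Integrable.fintype_prod_dep fun i => hfe i (k i)).const_mul _
    _ = _ := sum_congr rfl fun k _ => by
        rw [integral_const_mul, integral_fintype_prod_eq_prod fun i y => f i y ^ k i * e i y]

theorem integral_tsum_mul_pow_mul {X : Type*} [MeasurableSpace X] {μ : Measure X}
    {a : ℕ → ℝ} {S P : X → ℝ} {R : ℝ} (ha0 : ∀ q, 0 ≤ a q) (hR : Summable fun q => a q * R ^ q)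
    (hS : AEStronglyMeasurable S μ) (hSR : ∀ x, |S x| ≤ R) (hP : Integrable P μ) :
    ∫ x, (∑' q, a q * S x ^ q) * P x ∂μ = ∑' q, a q * ∫ x, S x ^ q * P x ∂μ := by
  have hnorm : ∀ q x, ‖a q * S x ^ q‖ ≤ a q * R ^ q := fun q x => by
    rw [norm_mul, norm_pow, Real.norm_of_nonneg (ha0 q)]
    exact mul_le_mul_of_nonneg_left (pow_le_pow_left₀ (norm_nonneg _) (hSR x) q) (ha0 q)
  have hint : ∀ q, Integrable (fun x => a q * S x ^ q * P x) μ := fun q =>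
    hP.bdd_mul (aestronglyMeasurable_const.mul (hS.pow q)) (.of_forall (hnorm q))
  have hsum : Summable fun q => ∫ x, ‖a q * S x ^ q * P x‖ ∂μ := by
    refine .of_nonneg_of_le (fun q => integral_nonneg fun x => norm_nonneg _) (fun q => ?_)
      (hR.mul_right (∫ x, ‖P x‖ ∂μ))
    rw [← integral_const_mul]
    refine integral_mono (hint q).norm (hP.norm.const_mul _) fun x => ?_
    rw [norm_mul]
    exact mul_le_mul_of_nonneg_right (hnorm q x) (norm_nonneg _)
  calc ∫ x, (∑' q, a q * S x ^ q) * P x ∂μ = ∫ x, ∑' q, a q * S x ^ q * P x ∂μ := by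
        simp_rw [tsum_mul_right]
    _ = ∑' q, ∫ x, a q * S x ^ q * P x ∂μ :=
        (integral_tsum_of_summable_integral_norm hint hsum).symm
    _ = ∑' q, a q * ∫ x, S x ^ q * P x ∂μ := by simp_rw [mul_assoc, integral_const_mul]

theorem stmt_13_general (d n : ℕ)
    (b a : ℕ → ℝ) (hb0 : ∀ m : ℕ, 0 ≤ b m) (hb1 : Summable b)
    (ha0 : ∀ q : ℕ, 0 ≤ a q) (hag : ∀ t : ℝ, Summable fun q : ℕ => a q * t ^ q)
    (e : Fin n → Metric.sphere (0 : EuclideanSpace ℝ (Fin d)) 1 → ℝ)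
    (he : ∀ i, Continuous (e i))
    (lam : Fin n → ℕ → ℝ)
    (hlam : ∀ (i : Fin n) (α : ℕ),
      0 ≤ lam i α ∧
        lam i α ≤ ((sphereMeasure d Set.univ).toReal * dotSeries b 1) ^ α)
    (heig : ∀ (i : Fin n) (α : ℕ) (y : Metric.sphere (0 : EuclideanSpace ℝ (Fin d)) 1),
      (∫ x : Metric.sphere (0 : EuclideanSpace ℝ (Fin d)) 1,
          (dotSeries b
              ((inner ℝ ((x : EuclideanSpace ℝ (Fin d))) ((y : EuclideanSpace ℝ (Fin d))) : ℝ)))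
              ^ α * e i x ∂(sphereMeasure d)) = lam i α * e i y) :
    Summable (fun q : ℕ => a q * ∑ t ∈ Finset.Nat.antidiagonalTuple n q,
      (Nat.multinomial Finset.univ t : ℝ) * ∏ i, lam i (t i)) ∧
    ∀ Y : Fin n → Metric.sphere (0 : EuclideanSpace ℝ (Fin d)) 1,
      (∫ X : Fin n → Metric.sphere (0 : EuclideanSpace ℝ (Fin d)) 1,
          kerNK d n b a X Y * ∏ i, e i (X i)
          ∂(Measure.pi fun _ : Fin n => sphereMeasure d)) =
        (∑' q : ℕ, a q * ∑ t ∈ Finset.Nat.antidiagonalTuple n q,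
          (Nat.multinomial Finset.univ t : ℝ) * ∏ i, lam i (t i)) * ∏ i, e i (Y i) := by
  simp_rw [← piAntidiag_univ_fin_eq_antidiagonalTuple]
  refine ⟨summable_mul_sum_multinomial_mul_prod ha0 (by simpa using hag _)
    (fun i k => (hlam i k).1) (fun i k => (hlam i k).2), fun Y => ?_⟩
  set f : Fin n → Metric.sphere (0 : EuclideanSpace ℝ (Fin d)) 1 → ℝ :=
    fun i x => dotSeries b (inner ℝ (x : EuclideanSpace ℝ (Fin d)) (Y i : EuclideanSpace ℝ (Fin d)))
  have hf_cont (i : Fin n) : Continuous (f i) :=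
    (continuousOn_dotSeries hb0 hb1).comp_continuous
      (continuous_subtype_val.inner continuous_const)
      fun x => abs_le.1 (abs_inner_le_one_of_mem_sphere x.2 (Y i).2)
  have hS_le (X : Fin n → Metric.sphere (0 : EuclideanSpace ℝ (Fin d)) 1) :
      |∑ i, f i (X i)| ≤ n * dotSeries b 1 :=
    calc |∑ i, f i (X i)| ≤ ∑ i, |f i (X i)| := abs_sum_le_sum_abs _ _
      _ ≤ ∑ _i : Fin n, dotSeries b 1 := sum_le_sum fun i _ =>
        abs_dotSeries_le hb0 hb1 (abs_inner_le_one_of_mem_sphere (X i).2 (Y i).2)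
      _ = n * dotSeries b 1 := by simp
  have hint (i : Fin n) (k : ℕ) : Integrable (fun x => f i x ^ k * e i x) (sphereMeasure d) :=
    (((hf_cont i).pow k).mul (he i)).integrable_of_hasCompactSupport (.of_compactSpace _)
  calc _ = ∑' q, a q * ∫ X, (∑ i, f i (X i)) ^ q * ∏ i, e i (X i)
          ∂(Measure.pi fun _ : Fin n => sphereMeasure d) :=
        integral_tsum_mul_pow_mul ha0 (hag _)
          (continuous_finsetSum _ fun i _ =>
            (hf_cont i).comp (continuous_apply i)).aestronglyMeasurable
          hS_le (Integrable.fintype_prod fun i => by simpa using hint i 0)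
    _ = _ := by
        rw [← tsum_mul_right]
        refine tsum_congr fun q => ?_
        simp only [integral_sum_pow_mul_prod hint, f, heig, prod_mul_distrib, ← mul_assoc,
          ← sum_mul]

/-- Suppose `f₁ = ∑ b_m x^m` with `b_m ≥ 0` converges at `x = 1`, and
`g = ∑ a_q t^q` with `a_q ≥ 0` converges on all of `ℝ`. If `e₁, …, eₙ` are continuous on
`S^{d-1}` with `∫ f₁(⟨x,y⟩)^α e_i(x) dσ_{d-1}(x) = λ_i(α) e_i(y)` and
`0 ≤ λ_i(α) ≤ (|S^{d-1}| f₁(1))^α`, then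
`μ := ∑_q a_q ∑_{α₁+⋯+αₙ=q} (q!/(α₁!⋯αₙ!)) ∏ λ_i(α_i)` is given by an absolutely
convergent series and `∫_I K_N(X,Y) ∏ e_i(X_i) d(⊗σ_{d-1})(X) = μ ∏ e_i(Y_i)`. -/
theorem stmt_13 (d n : ℕ) (hd : 2 ≤ d) (hn : 1 ≤ n)
    (b a : ℕ → ℝ) (hb0 : ∀ m : ℕ, 0 ≤ b m) (hb1 : Summable b)
    (ha0 : ∀ q : ℕ, 0 ≤ a q) (hag : ∀ t : ℝ, Summable fun q : ℕ => a q * t ^ q)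
    (e : Fin n → Metric.sphere (0 : EuclideanSpace ℝ (Fin d)) 1 → ℝ)
    (he : ∀ i, Continuous (e i))
    (lam : Fin n → ℕ → ℝ)
    (hlam : ∀ (i : Fin n) (α : ℕ),
      0 ≤ lam i α ∧
        lam i α ≤ ((sphereMeasure d Set.univ).toReal * dotSeries b 1) ^ α)
    (heig : ∀ (i : Fin n) (α : ℕ) (y : Metric.sphere (0 : EuclideanSpace ℝ (Fin d)) 1),
      (∫ x : Metric.sphere (0 : EuclideanSpace ℝ (Fin d)) 1,
          (dotSeries b
              ((inner ℝ ((x : EuclideanSpace ℝ (Fin d))) ((y : EuclideanSpace ℝ (Fin d))) : ℝ)))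
              ^ α * e i x ∂(sphereMeasure d)) = lam i α * e i y) :
    Summable (fun q : ℕ => a q * ∑ t ∈ Finset.Nat.antidiagonalTuple n q,
      (Nat.multinomial Finset.univ t : ℝ) * ∏ i, lam i (t i)) ∧
    ∀ Y : Fin n → Metric.sphere (0 : EuclideanSpace ℝ (Fin d)) 1,
      (∫ X : Fin n → Metric.sphere (0 : EuclideanSpace ℝ (Fin d)) 1,
          kerNK d n b a X Y * ∏ i, e i (X i)
          ∂(Measure.pi fun _ : Fin n => sphereMeasure d)) =
        (∑' q : ℕ, a q * ∑ t ∈ Finset.Nat.antidiagonalTuple n q,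
          (Nat.multinomial Finset.univ t : ℝ) * ∏ i, lam i (t i)) * ∏ i, e i (Y i) :=
  stmt_13_general d n b a hb0 hb1 ha0 hag e he lam hlam heig
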